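/- Let K be a separable complex Hilbert space and let J be a range function in K. Then J is measurable if and only if the map λ ↦ H²_{J(λ)} is a measurable range function in H²_K. -/

import Mathlib

noncomputable section

open MeasureTheory Complex Submodule
open scoped InnerProductSpace ENNReal ComplexConjugate

set_option synthInstance.maxHeartbeats 1000000
set_option maxHeartbeats 1600000

namespace ShiftPaper

instance : Fact ((0:ℝ) < 1) := ⟨one_pos⟩

/-- The circle, modelled as `ℝ/ℤ`. -/
abbrev 𝕋 : Type := UnitAddCircle

/-- The normalized Haar (Lebesgue) probability measure on the circle. -/
abbrev μT : Measure 𝕋 := AddCircle.haarAddCircle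

/-- The space `L²(𝕋, E)` of square-integrable `E`-valued functions on the circle. -/
abbrev L2 (E : Type*) [NormedAddCommGroup E] := Lp E 2 μT

lemma norm_fourier (n : ℤ) (t : 𝕋) : ‖fourier n t‖ = 1 := by
  rw [fourier_apply]
  exact Circle.norm_coe _

section mulF

variable {E : Type*} [NormedAddCommGroup E] [NormedSpace ℂ E]

lemma memLp_mulF (n : ℤ) (f : L2 E) :
    MemLp (fun t => fourier n t • (f : 𝕋 → E) t) 2 μT := by
  refine MemLp.of_le (Lp.memLp f)
    (((fourier n).continuous.aestronglyMeasurable).smul (Lp.aestronglyMeasurable f)) ?_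
  refine Filter.Eventually.of_forall fun t => ?_
  rw [norm_smul, norm_fourier, one_mul]

/-- Multiplication by `fourier n` (i.e. by `λ ↦ λⁿ`) as a bounded operator on `L²(𝕋, E)`.
For `n = 1` this is the bilateral shift `U`; for general `n : ℤ` it is `Uⁿ`. -/
def mulF (n : ℤ) : L2 E →L[ℂ] L2 E :=
  LinearMap.mkContinuous
    { toFun := fun f => (memLp_mulF n f).toLp _
      map_add' := fun f g => by
        rw [← MemLp.toLp_add (memLp_mulF n f) (memLp_mulF n g)]
        refine MemLp.toLp_congr _ _ ?_
        filter_upwards [Lp.coeFn_add f g] with t ht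
        simp only [ht, Pi.add_apply, smul_add]
      map_smul' := fun c f => by
        simp only [RingHom.id_apply]
        rw [← MemLp.toLp_const_smul c (memLp_mulF n f)]
        refine MemLp.toLp_congr _ _ ?_
        filter_upwards [Lp.coeFn_smul c f] with t ht
        rw [ht]
        simp only [Pi.smul_apply]
        rw [smul_comm] }
    1
    (fun f => by
      simp only [LinearMap.coe_mk, AddHom.coe_mk, one_mul]
      rw [Lp.norm_toLp _ (memLp_mulF n f), Lp.norm_def]
      refine le_of_eq (congrArg ENNReal.toReal ?_)
      refine eLpNorm_congr_norm_ae ?_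
      refine Filter.Eventually.of_forall fun t => ?_
      rw [norm_smul, norm_fourier, one_mul])

lemma coeFn_mulF (n : ℤ) (f : L2 E) :
    (mulF n f : 𝕋 → E) =ᵐ[μT] fun t => fourier n t • (f : 𝕋 → E) t :=
  MemLp.coeFn_toLp (memLp_mulF n f)

end mulF

section HardySpace

variable (K : Type) [NormedAddCommGroup K] [InnerProductSpace ℂ K] [CompleteSpace K]

/-- The continuous function `t ↦ fourier n t • x`. -/
def fourierSmulCM (n : ℤ) (x : K) : C(𝕋, K) :=
  ⟨fun t => fourier n t • x, (fourier n).continuous.smul continuous_const⟩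

/-- The element of `L²(𝕋, K)` given by `t ↦ fourier n t • x`. -/
def expVec (n : ℤ) (x : K) : L2 K := ContinuousMap.toLp 2 μT ℂ (fourierSmulCM K n x)

lemma coeFn_expVec (n : ℤ) (x : K) :
    (expVec K n x : 𝕋 → K) =ᵐ[μT] fun t => fourier n t • x :=
  ContinuousMap.coeFn_toLp (𝕜 := ℂ) μT (fourierSmulCM K n x)

/-- The Hardy space `H²(𝕋, K)`, as the subspace of `L²(𝕋, K)` of functions all of whose
weak Fourier coefficients of negative index vanish (equivalently, all of whose coordinate
functions with respect to an orthonormal basis of `K` lie in the scalar Hardy space `H²`). -/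
def Hardy : Submodule ℂ (L2 K) :=
  ⨅ (n : ℤ) (_ : n < 0) (x : K), LinearMap.ker (innerSL ℂ (expVec K n x) : L2 K →ₗ[ℂ] ℂ)

lemma isClosed_Hardy : IsClosed ((Hardy K : Set (L2 K))) := by
  have h : (Hardy K : Set (L2 K)) = ⋂ (n : ℤ) (_ : n < 0) (x : K),
      (LinearMap.ker (innerSL ℂ (expVec K n x) : L2 K →ₗ[ℂ] ℂ) : Set (L2 K)) := by
    simp only [Hardy, Submodule.coe_iInf]
  rw [h]
  exact isClosed_iInter fun n => isClosed_iInter fun _ => isClosed_iInter fun x =>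
    (ContinuousLinearMap.isClosed_ker _)

/-- The Hardy space `H²(𝕋, K)` as a Hilbert space in its own right. -/
abbrev H2 := ↥(Hardy K)

instance : CompleteSpace (H2 K) := (isClosed_Hardy K).completeSpace_coe

end HardySpace


section Shift

variable (K : Type) [NormedAddCommGroup K] [InnerProductSpace ℂ K] [CompleteSpace K]

lemma inner_expVec_mulF (n : ℤ) (x : K) (f : L2 K) :
    (inner ℂ (expVec K n x) (mulF 1 f) : ℂ) = inner ℂ (expVec K (n - 1) x) f := by
  rw [MeasureTheory.L2.inner_def, MeasureTheory.L2.inner_def]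
  refine integral_congr_ae ?_
  filter_upwards [coeFn_mulF 1 f, coeFn_expVec K n x, coeFn_expVec K (n-1) x] with t h1 h2 h3
  rw [h1, h2, h3, inner_smul_left, inner_smul_left, inner_smul_right,
    ← fourier_neg, ← fourier_neg, ← mul_assoc, ← fourier_add]
  have h : -n + 1 = -(n - 1) := by ring
  rw [h]

lemma mulF_mem_hardy {f : L2 K} (hf : f ∈ Hardy K) : mulF 1 f ∈ Hardy K := by
  simp only [Hardy, Submodule.mem_iInf, LinearMap.mem_ker, ContinuousLinearMap.coe_coe, innerSL_apply_apply] at hf ⊢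
  intro n hn x
  rw [inner_expVec_mulF]
  exact hf (n - 1) (by omega) x

/-- The unilateral shift `S` on the Hardy space `H²(𝕋, K)`: the restriction of the
bilateral shift (multiplication by the variable) to the Hardy space. -/
def S : H2 K →L[ℂ] H2 K where
  toLinearMap := (mulF (E := K) 1).toLinearMap.restrict
    (p := Hardy K) (q := Hardy K) (fun _ hx => mulF_mem_hardy K hx)
  cont := by
    apply Continuous.subtype_mk
    exact (mulF (E := K) 1).continuous.comp continuous_subtype_val

/-- The operator `Ŝ` on `L²(𝕋, H²(𝕋,K))`, acting pointwisely (on the values) as the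
unilateral shift `S`. -/
def Shat : L2 (H2 K) →L[ℂ] L2 (H2 K) := (S K).compLpL 2 μT

lemma integral_fourier_eq_zero {m : ℤ} (hm : m ≠ 0) :
    ∫ t : 𝕋, fourier m t ∂μT = 0 := by
  have h0 : ((0:ℤ)) ≠ m := fun h => hm h.symm
  have h : (inner ℂ (fourierLp (T := 1) 2 (0:ℤ)) (fourierLp 2 m) : ℂ) = 0 :=
    orthonormal_fourier.2 h0
  rw [MeasureTheory.L2.inner_def] at h
  rw [← h]
  refine integral_congr_ae ?_
  filter_upwards [coeFn_fourierLp 2 (0:ℤ), coeFn_fourierLp 2 m] with t h1 h2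
  rw [h1, h2]
  simp [fourier_zero]

lemma const_mem_hardy (x : K) : expVec K 0 x ∈ Hardy K := by
  simp only [Hardy, Submodule.mem_iInf, LinearMap.mem_ker, ContinuousLinearMap.coe_coe, innerSL_apply_apply]
  intro n hn y
  rw [MeasureTheory.L2.inner_def]
  have h : ∀ᵐ t ∂μT, (inner ℂ ((expVec K n y : 𝕋 → K) t) ((expVec K 0 x : 𝕋 → K) t) : ℂ)
      = fourier (-n) t * (inner ℂ y x : ℂ) := by
    filter_upwards [coeFn_expVec K n y, coeFn_expVec K 0 x] with t h1 h2
    rw [h1, h2, inner_smul_left, inner_smul_right, ← fourier_neg, fourier_zero, one_mul]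
  rw [integral_congr_ae h, integral_mul_const,
    integral_fourier_eq_zero (by omega), zero_mul]

/-- The linear embedding of `K` into `H²(𝕋,K)` as constant functions. -/
def constL : K →ₗ[ℂ] H2 K where
  toFun x := ⟨expVec K 0 x, const_mem_hardy K x⟩
  map_add' x y := by
    apply Subtype.ext
    simp only [Submodule.coe_add]
    unfold expVec
    rw [← map_add]
    congr 1
    ext t
    simp [fourierSmulCM, smul_add]
  map_smul' c x := by
    apply Subtype.ext
    simp only [RingHom.id_apply, SetLike.val_smul]
    unfold expVec
    rw [← _root_.map_smul]
    congr 1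
    ext t
    simp [fourierSmulCM]

end Shift


section RangeFunctions

variable {F : Type*} [NormedAddCommGroup F] [InnerProductSpace ℂ F] [CompleteSpace F]

/-- The orthogonal projection onto a closed subspace, as a plain function (defined to be `0`
if the subspace is not closed). -/
def projTo (N : Submodule ℂ F) (x : F) : F :=
  letI := Classical.dec (IsClosed ((N : Set F)))
  if h : IsClosed ((N : Set F)) then
    haveI : CompleteSpace N := h.completeSpace_coe
    (orthogonalProjection N x : F)
  else 0

/-- A measurable range function in `F`: a map `J` from `𝕋` to closed subspaces of `F` such
that `t ↦ ⟪P_{J(t)} x, y⟫` is measurable for every `x, y ∈ F`. -/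
def IsMeasRange (J : 𝕋 → Submodule ℂ F) : Prop :=
  (∀ t, IsClosed ((J t : Set F))) ∧
  ∀ x y : F, Measurable fun t => (inner ℂ (projTo (J t) x) y : ℂ)

/-- The set of `f ∈ L²(𝕋, E)` such that `f(t) ∈ J(t)` for a.e. `t ∈ 𝕋`. -/
def rangeSet {E : Type*} [NormedAddCommGroup E] [NormedSpace ℂ E]
    (J : 𝕋 → Submodule ℂ E) : Set (L2 E) :=
  {f | ∀ᵐ t ∂μT, (f : 𝕋 → E) t ∈ J t}

end RangeFunctions

section OperatorNotions

variable {E : Type*} [NormedAddCommGroup E] [NormedSpace ℂ E]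

/-- A subspace `M` is invariant under the bounded operator `A` if `A(M) ⊆ M`. -/
def InvariantUnder (A : E →L[ℂ] E) (M : Submodule ℂ E) : Prop :=
  ∀ f ∈ M, A f ∈ M

/-- Two bounded operators commute. -/
def CommutesWith (A B : E →L[ℂ] E) : Prop := ∀ f, A (B f) = B (A f)

variable {F : Type*} [NormedAddCommGroup F] [InnerProductSpace ℂ F]

/-- A subspace `M` is reducing for `A` if both `M` and `M^⊥` are invariant under `A`. -/
def Reducing (A : F →L[ℂ] F) (M : Submodule ℂ F) : Prop :=
  InvariantUnder A M ∧ InvariantUnder A Mᗮ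

/-- `Φ` is a partial isometry with initial space `W`: it is isometric on `W` and vanishes
on `W^⊥`. -/
def IsPartialIsometryOn (Φ : F →L[ℂ] F) (W : Submodule ℂ F) : Prop :=
  (∀ f ∈ W, ‖Φ f‖ = ‖f‖) ∧ ∀ f ∈ Wᗮ, Φ f = 0

end OperatorNotions

section FullHardy

variable (K : Type) [NormedAddCommGroup K] [InnerProductSpace ℂ K] [CompleteSpace K]

/-- For a subspace `N ⊆ K`, the subspace `H²_N` of `H²_K`: those elements of the Hardy space
taking values in `N` almost everywhere. -/
def hardyIn (N : Submodule ℂ K) : Submodule ℂ (H2 K) where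
  carrier := {g | ∀ᵐ z ∂μT, ((g : L2 K) : 𝕋 → K) z ∈ N}
  zero_mem' := by
    have h0 : ((0 : H2 K) : L2 K) = 0 := rfl
    rw [Set.mem_setOf_eq, h0]
    filter_upwards [Lp.coeFn_zero K 2 μT] with z hz
    rw [hz]
    exact N.zero_mem
  add_mem' := by
    intro a b ha hb
    have h0 : ((a + b : H2 K) : L2 K) = (a : L2 K) + (b : L2 K) := rfl
    rw [Set.mem_setOf_eq, h0]
    filter_upwards [ha, hb, Lp.coeFn_add (a : L2 K) (b : L2 K)] with z ha' hb' hadd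
    rw [hadd]
    exact N.add_mem ha' hb'
  smul_mem' := by
    intro c a ha
    have h0 : ((c • a : H2 K) : L2 K) = c • (a : L2 K) := rfl
    rw [Set.mem_setOf_eq, h0]
    filter_upwards [ha, Lp.coeFn_smul c (a : L2 K)] with z ha' hsmul
    rw [hsmul]
    exact N.smul_mem c ha'

/-- The set of `f ∈ L²(𝕋, H²_K)` with `f(t) ∈ H²_{J(t)}` for a.e. `t`. If `J` is a measurable
range function in `K`, this is the full-Hardy subspace with base `J`. -/
def fullHardySet (J : 𝕋 → Submodule ℂ K) : Set (L2 (H2 K)) :=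
  {f | ∀ᵐ t ∂μT, (f : 𝕋 → H2 K) t ∈ hardyIn K (J t)}

/-- A subspace `W ⊆ L²(𝕋, H²_K)` is full-Hardy if it is of the form
`{f : f(t) ∈ H²_{J(t)} a.e.}` for some measurable range function `J` in `K`. -/
def IsFullHardy (W : Submodule ℂ (L2 (H2 K))) : Prop :=
  ∃ J : 𝕋 → Submodule ℂ K, IsMeasRange J ∧ (W : Set (L2 (H2 K))) = fullHardySet K J

end FullHardy

section Dimension

open scoped Classical in
/-- The Hilbert-space dimension of a subspace, as an element of `ℕ∞` (in a separable ambient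
space this is the cardinality of any orthonormal basis). -/
def dimSub {F : Type*} [NormedAddCommGroup F] [InnerProductSpace ℂ F]
    (N : Submodule ℂ F) : ℕ∞ :=
  if FiniteDimensional ℂ ↥N then (Module.finrank ℂ ↥N : ℕ∞) else ⊤

end Dimension

section ScalarCase

/-- Evaluation of an element of the scalar Hardy space (via its chosen representative). -/
def ev (g : H2 ℂ) (z : 𝕋) : ℂ := ((g : L2 ℂ) : 𝕋 → ℂ) z

/-- Iterated evaluation of an element of `L²(𝕋, H²)`. -/
def ev2 (f : L2 (H2 ℂ)) (t z : 𝕋) : ℂ := ev ((f : 𝕋 → H2 ℂ) t) z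

/-- A function `h ∈ H²` is inner if `|h(z)| = 1` for a.e. `z ∈ 𝕋`. -/
def IsInnerFn (g : H2 ℂ) : Prop := ∀ᵐ z ∂μT, ‖ev g z‖ = 1

lemma ev_zero : ∀ᵐ z ∂μT, ev (0 : H2 ℂ) z = 0 := by
  have h0 : ((0 : H2 ℂ) : L2 ℂ) = 0 := rfl
  unfold ev
  rw [h0]
  filter_upwards [Lp.coeFn_zero ℂ 2 μT] with z hz
  rw [hz]
  rfl

lemma ev_add (u v : H2 ℂ) : ∀ᵐ z ∂μT, ev (u + v) z = ev u z + ev v z := by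
  have h0 : ((u + v : H2 ℂ) : L2 ℂ) = (u : L2 ℂ) + (v : L2 ℂ) := rfl
  unfold ev
  rw [h0]
  filter_upwards [Lp.coeFn_add (u : L2 ℂ) (v : L2 ℂ)] with z hz
  rw [hz]
  rfl

lemma ev_smul (c : ℂ) (u : H2 ℂ) : ∀ᵐ z ∂μT, ev (c • u) z = c * ev u z := by
  have h0 : ((c • u : H2 ℂ) : L2 ℂ) = c • (u : L2 ℂ) := rfl
  unfold ev
  rw [h0]
  filter_upwards [Lp.coeFn_smul c (u : L2 ℂ)] with z hz
  rw [hz]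
  rfl

/-- For `w ∈ H²`, the subspace `w·H² = {w·k : k ∈ H²}` of `H²` (membership described via
a.e. pointwise multiplication of representatives). -/
def mulSet (w : H2 ℂ) : Submodule ℂ (H2 ℂ) where
  carrier := {u | ∃ k : H2 ℂ, ∀ᵐ z ∂μT, ev u z = ev w z * ev k z}
  zero_mem' := by
    refine ⟨0, ?_⟩
    filter_upwards [ev_zero] with z hz
    rw [hz, mul_zero]
  add_mem' := by
    rintro u v ⟨k₁, h₁⟩ ⟨k₂, h₂⟩
    refine ⟨k₁ + k₂, ?_⟩
    filter_upwards [h₁, h₂, ev_add u v, ev_add k₁ k₂] with z e1 e2 e3 e4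
    rw [e3, e1, e2, e4, mul_add]
  smul_mem' := by
    rintro c u ⟨k, h⟩
    refine ⟨c • k, ?_⟩
    filter_upwards [h, ev_smul c u, ev_smul c k] with z e1 e2 e3
    rw [e2, e1, e3]
    ring

/-- The set `φ·L²(𝕋, H²) = {φ g : g ∈ L²(𝕋,H²)}`, where `(φ g)(t)(z) = φ(t)(z)·g(t)(z)`. -/
def timesSet (φ : L2 (H2 ℂ)) : Set (L2 (H2 ℂ)) :=
  {h | ∃ g : L2 (H2 ℂ), ∀ᵐ t ∂μT, ∀ᵐ z ∂μT, ev2 h t z = ev2 φ t z * ev2 g t z}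

end ScalarCase


/-!
The orthogonal projection of `H²_K` onto `H²_N` acts pointwise as `P_N`, because a pointwise
operator `A` preserves `H²_K` (`⟪λⁿ x, A f⟫ = ⟪λⁿ A* x, f⟫`). Hence
`⟪P_{H²_{J(λ)}} f, g⟫ = ⟪P_{J(λ)} ∘ f, g⟫_{L²}`. For `f = c · 1_A` this equals
`⟪P_{J(λ)} c, ∫_A g⟫`, which is measurable in `λ` when `J` is; as both sides are continuous in
`f`, density of simple functions in `L²` gives measurability for every `f`. Conversely, testing on
constant functions `f ≡ x`, `g ≡ y` gives back `⟪P_{J(λ)} x, y⟫`.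
-/

lemma projTo_eq_starProjection {F : Type*} [NormedAddCommGroup F] [InnerProductSpace ℂ F]
    [CompleteSpace F] (N : Submodule ℂ F) [CompleteSpace N] :
    projTo N = N.starProjection := by
  have hN : IsClosed (N : Set F) := (completeSpace_coe_iff_isComplete.mp ‹_›).isClosed
  funext x
  rw [projTo, dif_pos hN]
  rfl

lemma _root_.ContinuousLinearMap.compLpL_indicatorConstLp {α E F 𝕜 : Type*}
    [MeasurableSpace α] {μ : Measure α} {p : ℝ≥0∞} [Fact (1 ≤ p)] [NontriviallyNormedField 𝕜]
    [NormedAddCommGroup E] [NormedSpace 𝕜 E] [NormedAddCommGroup F] [NormedSpace 𝕜 F]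
    (L : E →L[𝕜] F) {s : Set α}
    (hs : MeasurableSet s) (hμs : μ s ≠ ∞) (c : E) :
    L.compLpL p μ (indicatorConstLp p hs hμs c) = indicatorConstLp p hs hμs (L c) := by
  refine Lp.ext ?_
  filter_upwards [L.coeFn_compLpL (indicatorConstLp p hs hμs c),
    indicatorConstLp_coeFn (p := p) (μ := μ) (hs := hs) (hμs := hμs) (c := c),
    indicatorConstLp_coeFn (p := p) (μ := μ) (hs := hs) (hμs := hμs) (c := L c)]
    with z hL hc hLc
  rw [hL, hc, hLc]
  by_cases hz : z ∈ s <;> simp [hz]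

lemma measurable_inner_compLpL {α β E : Type*} [MeasurableSpace α] {μ : Measure α}
    [MeasurableSpace β] [NormedAddCommGroup E] [InnerProductSpace ℂ E] [CompleteSpace E]
    {A : β → E →L[ℂ] E} (hA : ∀ x y, Measurable fun t => ⟪A t x, y⟫_ℂ) (f g : Lp E 2 μ) :
    Measurable fun t => ⟪(A t).compLpL 2 μ f, g⟫_ℂ := by
  induction f using Lp.induction (hp_ne_top := ENNReal.ofNat_ne_top (n := 2)) with
  | indicatorConst c hs hμs =>
    simp only [Lp.simpleFunc.coe_indicatorConst, ContinuousLinearMap.compLpL_indicatorConstLp,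
      L2.inner_indicatorConstLp_eq_inner_setIntegral]
    exact hA c _
  | add _ _ _ hf hg =>
    simp only [map_add, inner_add_left]
    exact hf.add hg
  | isClosed =>
    refine IsSeqClosed.isClosed fun u f hu hlim => ?_
    refine measurable_of_tendsto_metrizable hu (tendsto_pi_nhds.2 fun t => ?_)
    have hcont : Continuous fun f : Lp E 2 μ => ⟪(A t).compLpL 2 μ f, g⟫_ℂ :=
      ((A t).compLpL 2 μ).continuous.inner continuous_const
    exact (hcont.tendsto f).comp hlim

section PointwiseOperators

open ContinuousLinearMap

variable {K : Type} [NormedAddCommGroup K] [InnerProductSpace ℂ K] [CompleteSpace K]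

lemma inner_expVec_compLpL (A : K →L[ℂ] K) (n : ℤ) (x : K) (f : L2 K) :
    ⟪expVec K n x, A.compLpL 2 μT f⟫_ℂ = ⟪expVec K n (adjoint A x), f⟫_ℂ := by
  rw [L2.inner_def, L2.inner_def]
  refine integral_congr_ae ?_
  filter_upwards [A.coeFn_compLpL f, coeFn_expVec K n x, coeFn_expVec K n (adjoint A x)]
    with t hAf hx hAx
  rw [hAf, hx, hAx, inner_smul_left, inner_smul_left, adjoint_inner_left]

lemma compLpL_mem_Hardy (A : K →L[ℂ] K) {f : L2 K} (hf : f ∈ Hardy K) :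
    A.compLpL 2 μT f ∈ Hardy K := by
  simp only [Hardy, Submodule.mem_iInf, LinearMap.mem_ker, ContinuousLinearMap.coe_coe,
    innerSL_apply_apply] at hf ⊢
  intro n hn x
  rw [inner_expVec_compLpL]
  exact hf n hn _

lemma inner_compLpL_constL (A : K →L[ℂ] K) (x y : K) :
    ⟪A.compLpL 2 μT (constL K x : L2 K), (constL K y : L2 K)⟫_ℂ = ⟪A x, y⟫_ℂ := by
  change ⟪A.compLpL 2 μT (expVec K 0 x), expVec K 0 y⟫_ℂ = _
  rw [L2.inner_def]
  have hconst : ∀ᵐ t ∂μT,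
      ⟪(A.compLpL 2 μT (expVec K 0 x) : 𝕋 → K) t, (expVec K 0 y : 𝕋 → K) t⟫_ℂ = ⟪A x, y⟫_ℂ := by
    filter_upwards [A.coeFn_compLpL (expVec K 0 x), coeFn_expVec K 0 x, coeFn_expVec K 0 y]
      with t hAx hx hy
    rw [hAx, hx, hy, fourier_zero, one_smul, one_smul]
  rw [integral_congr_ae hconst, integral_const, probReal_univ, one_smul]

end PointwiseOperators

section HardyIn

variable (K : Type) [NormedAddCommGroup K] [InnerProductSpace ℂ K] {N : Submodule ℂ K}
  [CompleteSpace N]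

lemma mem_hardyIn_iff_compLpL_eq_zero {g : H2 K} :
    g ∈ hardyIn K N ↔ Nᗮ.starProjection.compLpL 2 μT (g : L2 K) = 0 := by
  rw [Lp.eq_zero_iff_ae_eq_zero, Filter.EventuallyEq]
  change (∀ᵐ z ∂μT, ((g : L2 K) : 𝕋 → K) z ∈ N) ↔ _
  refine Filter.eventually_congr ?_
  filter_upwards [Nᗮ.starProjection.coeFn_compLpL (g : L2 K)] with z hPz
  rw [hPz, Pi.zero_apply, Submodule.starProjection_apply_eq_zero_iff, N.orthogonal_orthogonal]

lemma isClosed_hardyIn : IsClosed (hardyIn K N : Set (H2 K)) := by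
  have hset : (hardyIn K N : Set (H2 K)) =
      (fun g : H2 K => Nᗮ.starProjection.compLpL 2 μT (g : L2 K)) ⁻¹' {0} := by
    ext g
    exact mem_hardyIn_iff_compLpL_eq_zero K
  rw [hset]
  exact isClosed_singleton.preimage
    ((Nᗮ.starProjection.compLpL 2 μT).continuous.comp continuous_subtype_val)

variable [CompleteSpace K]

lemma coe_projTo_hardyIn (f : H2 K) :
    ((projTo (hardyIn K N) f : H2 K) : L2 K) = N.starProjection.compLpL 2 μT (f : L2 K) := by
  have : CompleteSpace (hardyIn K N) := (isClosed_hardyIn K).completeSpace_coe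
  set Pf : L2 K := N.starProjection.compLpL 2 μT (f : L2 K)
  have hPf : (Pf : 𝕋 → K) =ᵐ[μT] fun z => N.starProjection ((f : L2 K) z) :=
    N.starProjection.coeFn_compLpL (f : L2 K)
  have hmem : (⟨Pf, compLpL_mem_Hardy _ f.2⟩ : H2 K) ∈ hardyIn K N := by
    filter_upwards [hPf] with z hz
    exact hz ▸ N.starProjection_apply_mem _
  have horth : ∀ w ∈ hardyIn K N, ⟪f - ⟨Pf, compLpL_mem_Hardy _ f.2⟩, w⟫_ℂ = 0 := by
    intro w hw
    rw [Submodule.coe_inner, Submodule.coe_sub, L2.inner_def]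
    refine (integral_congr_ae ?_).trans (integral_zero _ _)
    filter_upwards [Lp.coeFn_sub (f : L2 K) Pf, hPf, hw] with z hsub hz hwz
    rw [hsub, Pi.sub_apply, hz]
    exact N.starProjection_inner_eq_zero _ _ hwz
  rw [projTo_eq_starProjection, Submodule.eq_starProjection_of_mem_of_inner_eq_zero hmem horth]

end HardyIn

section Statements

variable (K : Type) [NormedAddCommGroup K] [InnerProductSpace ℂ K] [CompleteSpace K]
  [SecondCountableTopology K]

theorem statement11 (J : 𝕋 → Submodule ℂ K) (hc : ∀ t, IsClosed ((J t : Set K))) :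
    IsMeasRange J ↔ IsMeasRange (fun t => hardyIn K (J t)) := by
  have : ∀ t, CompleteSpace (J t) := fun t => (hc t).completeSpace_coe
  have hinner : ∀ t (f g : H2 K), ⟪projTo (hardyIn K (J t)) f, g⟫_ℂ =
      ⟪(J t).starProjection.compLpL 2 μT (f : L2 K), (g : L2 K)⟫_ℂ := fun t f g => by
    rw [Submodule.coe_inner, coe_projTo_hardyIn]
  simp only [IsMeasRange, projTo_eq_starProjection, hinner, hc, implies_true, true_and]
  refine ⟨fun hJ => ⟨fun t => isClosed_hardyIn K, fun f g => measurable_inner_compLpL hJ _ _⟩,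
    fun hJH x y => ?_⟩
  simpa only [inner_compLpL_constL] using hJH.2 (constL K x) (constL K y)

end Statements

end ShiftPaper
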